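/- Let y, z : ℝ → ℝ be three times continuously differentiable with κ(s) = √(y''(s)² + z''(s)²) > 0 for all s, and let α_N(s) = N(s) = (1/κ(s))·(0, y''(s), z''(s)) be the principal normal spherical representation of the Galilean curve α(s) = (s, y(s), z(s)). Then the Galilean norm of N'(s) equals |τ(s)|, where τ(s) = (y''(s)·z'''(s) − y'''(s)·z''(s))/κ(s)²; consequently the Galilean arc length of α_N from 0 to s equals ∫₀ˢ |τ(u)| du, i.e., the arc length parameter s_N of α_N satisfies ds_N/ds = |τ(s)|. -/

import Mathlib

/-!
The unit vector `N = (0, a, b) / √(a² + b²)` turns in the plane `x = 0` with angular velocity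
`(a b' - a' b) / (a² + b²)`, which for `a = y''`, `b = z''` is `τ`. Hence `N'` is `τ` times the
unit vector `(0, -b, a) / √(a² + b²)`, so its Galilean norm is `|τ|`; since `τ` is continuous,
the fundamental theorem of calculus gives `ds_N/ds = |τ|`.
-/

/-- The Galilean norm of a vector `(0, a, b)` is `√(a² + b²)`. -/
noncomputable def galNorm (v : Fin 3 → ℝ) : ℝ := Real.sqrt ((v 1) ^ 2 + (v 2) ^ 2)

section Normalization

variable {a b : ℝ → ℝ} {a' b' s : ℝ}

theorem hasDerivAt_sqrt_sq_add_sq (ha : HasDerivAt a a' s) (hb : HasDerivAt b b' s)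
    (h : a s ^ 2 + b s ^ 2 ≠ 0) :
    HasDerivAt (fun t => √(a t ^ 2 + b t ^ 2))
      ((a s * a' + b s * b') / √(a s ^ 2 + b s ^ 2)) s := by
  have hsum : HasDerivAt (fun t => a t ^ 2 + b t ^ 2) (2 * (a s * a' + b s * b')) s :=
    ((ha.pow 2).add (hb.pow 2)).congr_deriv (by ring)
  exact (hsum.sqrt h).congr_deriv (by field_simp)

theorem hasDerivAt_div_sqrt_sq_add_sq (ha : HasDerivAt a a' s) (hb : HasDerivAt b b' s)
    (h : a s ^ 2 + b s ^ 2 ≠ 0) :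
    HasDerivAt (fun t => a t / √(a t ^ 2 + b t ^ 2))
      ((a s * b' - a' * b s) / √(a s ^ 2 + b s ^ 2) ^ 3 * -b s) s := by
  have hr : √(a s ^ 2 + b s ^ 2) ≠ 0 := by positivity
  have hsq : √(a s ^ 2 + b s ^ 2) ^ 2 = a s ^ 2 + b s ^ 2 := Real.sq_sqrt (by positivity)
  refine (ha.fun_div (hasDerivAt_sqrt_sq_add_sq ha hb h) hr).congr_deriv ?_
  field_simp
  linear_combination a' * hsq

theorem hasDerivAt_normalize_yz (ha : HasDerivAt a a' s) (hb : HasDerivAt b b' s)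
    (h : a s ^ 2 + b s ^ 2 ≠ 0) :
    HasDerivAt (fun t => (√(a t ^ 2 + b t ^ 2))⁻¹ • ![0, a t, b t])
      (((a s * b' - a' * b s) / √(a s ^ 2 + b s ^ 2) ^ 3) • ![0, -b s, a s]) s := by
  have hb' := hasDerivAt_div_sqrt_sq_add_sq hb ha (by rwa [add_comm])
  simp only [add_comm (b _ ^ 2)] at hb'
  rw [hasDerivAt_pi]
  intro i
  fin_cases i
  · simpa using hasDerivAt_const s (0 : ℝ)
  · simpa [inv_mul_eq_div] using hasDerivAt_div_sqrt_sq_add_sq ha hb h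
  · simp only [Fin.reduceFinMk, Pi.smul_apply, Fin.isValue, Matrix.cons_val, smul_eq_mul,
      inv_mul_eq_div]
    exact hb'.congr_deriv (by ring)

end Normalization

theorem galNorm_smul (c : ℝ) (v : Fin 3 → ℝ) : galNorm (c • v) = |c| * galNorm v := by
  simp only [galNorm, Pi.smul_apply, smul_eq_mul, mul_pow, ← mul_add]
  rw [Real.sqrt_mul (sq_nonneg c), Real.sqrt_sq_eq_abs]

theorem galNorm_vecCons (x a b : ℝ) : galNorm ![x, a, b] = √(a ^ 2 + b ^ 2) := rfl

/-- The Galilean norm of `N'(s)` equals `|τ(s)|`; consequently the Galilean arc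
length of the principal normal spherical representation `α_N = N` satisfies
`s_N(s) = ∫₀ˢ |τ(u)| du`, i.e. `ds_N/ds = |τ(s)|`. -/
theorem galilean_normal_spherical_arclength
    (y z κ τ sN : ℝ → ℝ) (αN : ℝ → Fin 3 → ℝ)
    (hy : ContDiff ℝ 3 y) (hz : ContDiff ℝ 3 z)
    (hκ : ∀ s, κ s = Real.sqrt ((deriv (deriv y) s) ^ 2 + (deriv (deriv z) s) ^ 2))
    (hκpos : ∀ s, 0 < κ s)
    (hτ : ∀ s, τ s =
      (deriv (deriv y) s * deriv (deriv (deriv z)) s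
        - deriv (deriv (deriv y)) s * deriv (deriv z) s) / (κ s) ^ 2)
    (hαN : ∀ s, αN s = (κ s)⁻¹ • ![0, deriv (deriv y) s, deriv (deriv z) s])
    (hsN : ∀ s, sN s = ∫ u in (0:ℝ)..s, galNorm (deriv αN u)) :
    (∀ s, galNorm (deriv αN s) = |τ s|) ∧
    (∀ s, sN s = ∫ u in (0:ℝ)..s, |τ u|) ∧
    (∀ s, HasDerivAt sN (|τ s|) s) := by
  set A := deriv (deriv y)
  set B := deriv (deriv z)
  have hA : ContDiff ℝ 1 A := (hy.deriv' (n := 2)).deriv'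
  have hB : ContDiff ℝ 1 B := (hz.deriv' (n := 2)).deriv'
  have hκ_eq : κ = fun t => √(A t ^ 2 + B t ^ 2) := funext hκ
  have hsum : ∀ s, A s ^ 2 + B s ^ 2 ≠ 0 := fun s h =>
    (hκpos s).ne' (by rw [hκ s, h, Real.sqrt_zero])
  have hN' : ∀ s, deriv αN s =
      ((A s * deriv B s - deriv A s * B s) / κ s ^ 3) • ![0, -B s, A s] := by
    intro s
    rw [funext hαN, hκ_eq]
    exact (hasDerivAt_normalize_yz (hA.differentiable one_ne_zero s).hasDerivAt
      (hB.differentiable one_ne_zero s).hasDerivAt (hsum s)).deriv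
  have hnorm : ∀ s, galNorm (deriv αN s) = |τ s| := by
    intro s
    have hκs := hκpos s
    rw [hN', galNorm_smul, galNorm_vecCons, neg_sq, add_comm, ← hκ s, hτ s, abs_div, abs_div,
      abs_of_pos (pow_pos hκs 3), abs_of_pos (pow_pos hκs 2)]
    field_simp
  have hτ_cont : Continuous τ := by
    rw [funext hτ]
    have hκ_cont : Continuous κ := hκ_eq ▸ by fun_prop
    exact ((hA.continuous.mul (hB.continuous_deriv le_rfl)).sub
      ((hA.continuous_deriv le_rfl).mul hB.continuous)).div (hκ_cont.pow 2)
      fun s => pow_ne_zero 2 (hκpos s).ne'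
  have hsN_eq : sN = fun s => ∫ u in (0:ℝ)..s, |τ u| := funext fun s => by
    rw [hsN s]
    exact intervalIntegral.integral_congr fun u _ => hnorm u
  refine ⟨hnorm, fun s => by rw [hsN_eq], fun s => ?_⟩
  rw [hsN_eq]
  exact (hτ_cont.abs.integral_hasStrictDerivAt 0 s).hasDerivAt
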